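/- Let λ ≥ 0 and let f : [−1,1] → ℝ be a broken solution with eigenvalue λ satisfying f(−1) = 1 and f(1) = 0. Then r(λ) > 0 and f(0) = e^{−b} / r(λ). -/

import Mathlib

/-- A "broken solution" with eigenvalue `lam` of the ODE `f'' + 2·b·f' = (log q)²·lam·f`
on `[-1,1]`: `f` is continuous on `[-1,1]`, twice continuously differentiable on
`[-1,0]` and on `[0,1]` (with one-sided derivatives at the endpoints), satisfies the
ODE on `(-1,0) ∪ (0,1)`, and its one-sided derivatives at `0` satisfy
`f'(0-) = B · f'(0+)`. -/
def IsBrokenSolution (q b B lam : ℝ) (f : ℝ → ℝ) : Prop :=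
  ContinuousOn f (Set.Icc (-1) 1) ∧
  ContDiffOn ℝ 2 f (Set.Icc (-1) 0) ∧
  ContDiffOn ℝ 2 f (Set.Icc 0 1) ∧
  (∀ x ∈ Set.Ioo (-1 : ℝ) 0 ∪ Set.Ioo (0 : ℝ) 1,
    deriv (deriv f) x + 2 * b * deriv f x = (Real.log q) ^ 2 * lam * f x) ∧
  derivWithin f (Set.Icc (-1) 0) 0 = B * derivWithin f (Set.Icc 0 1) 0

/-- `s(λ) = b² + (log q)²·λ`. -/
noncomputable def sFun (q b : ℝ) (lam : ℝ) : ℝ := b ^ 2 + (Real.log q) ^ 2 * lam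

/-- `r(λ) = (B+1)·∑ s(λ)ⁿ/(2n)! + (B−1)·b·∑ s(λ)ⁿ/(2n+1)!`. -/
noncomputable def rFun (q b B : ℝ) (lam : ℝ) : ℝ :=
  (B + 1) * ∑' n : ℕ, sFun q b lam ^ n / ((2 * n).factorial : ℝ) +
    (B - 1) * b * ∑' n : ℕ, sFun q b lam ^ n / ((2 * n + 1).factorial : ℝ)

/-! On each half-interval, `g x = exp (b x) f x` solves `g'' = ω² g` with `ω = √s(λ)`, and
constancy of the Wronskians of `g` against `cosh (ω x)` and `sinh (ω x) / ω` gives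
`g x = g 0 cosh (ω x) + g' 0 sinh (ω x) / ω`. Evaluating at `x = 1` and `x = -1` and adding `B`
times the first relation to the second eliminates the one-sided derivatives through
`f'(0-) = B f'(0+)`, leaving `exp (-b) = f 0 · r(λ)`, because the two series in `r(λ)` are
`cosh ω` and `sinh ω / ω`. Positivity of `r(λ)` follows from `|b| ≤ ω`, `|B - 1| ≤ B + 1` and
`sinh ω < cosh ω`. -/

open Set Real

/-- `sinh (ω * x) / ω`, continuously extended by `x` at `ω = 0`. -/
noncomputable def sinhDiv (ω x : ℝ) : ℝ := if ω = 0 then x else sinh (ω * x) / ω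

lemma sinhDiv_zero_right (ω : ℝ) : sinhDiv ω 0 = 0 := by
  unfold sinhDiv; split_ifs <;> simp

lemma sinhDiv_neg (ω x : ℝ) : sinhDiv ω (-x) = -sinhDiv ω x := by
  unfold sinhDiv; split_ifs <;> simp [neg_div]

lemma mul_sinhDiv (ω x : ℝ) : ω * sinhDiv ω x = sinh (ω * x) := by
  unfold sinhDiv; split_ifs with h
  · simp [h]
  · field_simp

lemma sinhDiv_nonneg (ω : ℝ) {x : ℝ} (hx : 0 ≤ x) : 0 ≤ sinhDiv ω x := by
  unfold sinhDiv
  split_ifs with h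
  · exact hx
  rcases lt_or_gt_of_ne h with hω | hω
  · exact div_nonneg_of_nonpos (sinh_nonpos_iff.2 (mul_nonpos_of_nonpos_of_nonneg hω.le hx)) hω.le
  · exact div_nonneg (sinh_nonneg_iff.2 (mul_nonneg hω.le hx)) hω.le

lemma hasDerivAt_sinhDiv (ω x : ℝ) : HasDerivAt (sinhDiv ω) (cosh (ω * x)) x := by
  rcases eq_or_ne ω 0 with rfl | h
  · have : sinhDiv 0 = id := by funext y; simp [sinhDiv]
    simpa [this] using hasDerivAt_id x
  · have : sinhDiv ω = fun y => sinh (ω * y) / ω := by funext y; simp [sinhDiv, h]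
    rw [this]
    refine (((hasDerivAt_id' x).const_mul ω).sinh.div_const ω).congr_deriv ?_
    field_simp

lemma hasDerivAt_cosh_mul (ω x : ℝ) :
    HasDerivAt (fun y => cosh (ω * y)) (ω ^ 2 * sinhDiv ω x) x := by
  refine ((hasDerivAt_id' x).const_mul ω).cosh.congr_deriv ?_
  rw [sq, mul_assoc, mul_sinhDiv, mul_one, mul_comm]

lemma cosh_sq_sub_sq_mul_sinhDiv_sq (ω x : ℝ) :
    cosh (ω * x) ^ 2 - ω ^ 2 * sinhDiv ω x ^ 2 = 1 := by
  rw [← mul_pow, mul_sinhDiv, cosh_sq_sub_sinh_sq]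

lemma tsum_pow_div_factorial_two_mul (ω : ℝ) :
    ∑' n : ℕ, (ω ^ 2) ^ n / ((2 * n).factorial : ℝ) = cosh ω := by
  simp_rw [cosh_eq_tsum, ← pow_mul]

lemma tsum_pow_div_factorial_two_mul_add_one (ω : ℝ) :
    ∑' n : ℕ, (ω ^ 2) ^ n / ((2 * n + 1).factorial : ℝ) = sinhDiv ω 1 := by
  rcases eq_or_ne ω 0 with rfl | h
  · rw [tsum_eq_single 0 (fun n hn => by simp [zero_pow hn])]
    simp [sinhDiv]
  · rw [← mul_right_inj' h, mul_sinhDiv, mul_one, sinh_eq_tsum, ← tsum_mul_left]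
    congr 1; funext n
    rw [pow_succ ω (2 * n), pow_mul]; ring

lemma eq_of_hasDerivAt_zero_Ioo {a c : ℝ} {W : ℝ → ℝ} (hW : ContinuousOn W (Icc a c))
    (hW' : ∀ x ∈ Ioo a c, HasDerivAt W 0 x) {x y : ℝ} (hx : x ∈ Icc a c) (hy : y ∈ Icc a c) :
    W x = W y := by
  have hdiff : DifferentiableOn ℝ W (interior (Icc a c)) := by
    rw [interior_Icc]; exact fun t ht => (hW' t ht).differentiableAt.differentiableWithinAt
  have hderiv : ∀ t ∈ interior (Icc a c), deriv W t = 0 := by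
    rw [interior_Icc]; exact fun t ht => (hW' t ht).deriv
  have hmono := monotoneOn_of_deriv_nonneg (convex_Icc a c) hW hdiff fun t ht => (hderiv t ht).ge
  have hanti := antitoneOn_of_deriv_nonpos (convex_Icc a c) hW hdiff fun t ht => (hderiv t ht).le
  rcases le_total x y with hxy | hxy
  · exact le_antisymm (hmono hx hy hxy) (hanti hx hy hxy)
  · exact le_antisymm (hanti hy hx hxy) (hmono hy hx hxy)

section LinearODE

variable {a c s : ℝ} {g g' : ℝ → ℝ}
  (hg : ∀ x ∈ Icc a c, HasDerivWithinAt g (g' x) (Icc a c) x)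
  (hg' : ContinuousOn g' (Icc a c))
  (hg'' : ∀ x ∈ Ioo a c, HasDerivAt g' (s * g x) x)
include hg hg' hg''

lemma wronskian_eq_of_ode {h h' : ℝ → ℝ} (hh : ∀ x, HasDerivAt h (h' x) x)
    (hh' : ∀ x, HasDerivAt h' (s * h x) x) {x y : ℝ} (hx : x ∈ Icc a c) (hy : y ∈ Icc a c) :
    g x * h' x - g' x * h x = g y * h' y - g' y * h y := by
  refine eq_of_hasDerivAt_zero_Ioo (W := fun x => g x * h' x - g' x * h x) ?_ ?_ hx hy
  · have hgc : ContinuousOn g (Icc a c) := fun x hx => (hg x hx).continuousWithinAt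
    exact (hgc.mul (fun x _ => (hh' x).continuousAt.continuousWithinAt)).sub
      (hg'.mul (fun x _ => (hh x).continuousAt.continuousWithinAt))
  · intro t ht
    have hgt : HasDerivAt g (g' t) t := (hg t (Ioo_subset_Icc_self ht)).hasDerivAt
      (Icc_mem_nhds ht.1 ht.2)
    refine ((hgt.mul (hh' t)).sub ((hg'' t ht).mul (hh t))).congr_deriv ?_
    ring

lemma eq_cosh_add_sinhDiv_of_ode {ω : ℝ} (hω : s = ω ^ 2) (h0 : (0 : ℝ) ∈ Icc a c) {x : ℝ}
    (hx : x ∈ Icc a c) : g x = g 0 * cosh (ω * x) + g' 0 * sinhDiv ω x := by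
  subst hω
  have hcosh := wronskian_eq_of_ode hg hg' hg'' (hasDerivAt_sinhDiv ω)
    (hasDerivAt_cosh_mul ω) hx h0
  have hsinh := wronskian_eq_of_ode hg hg' hg'' (hasDerivAt_cosh_mul ω)
    (fun x => (hasDerivAt_sinhDiv ω x).const_mul (ω ^ 2)) hx h0
  simp only [sinhDiv_zero_right, mul_zero, cosh_zero, mul_one, sub_zero, zero_sub] at hcosh hsinh
  -- Cramer's rule for the two Wronskian identities, whose determinant is `cosh² - ω² sinhDiv² = 1`
  linear_combination cosh (ω * x) * hcosh - sinhDiv ω x * hsinh -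
    g x * cosh_sq_sub_sq_mul_sinhDiv_sq ω x

end LinearODE

lemma hasDerivAt_derivWithin_Icc {a c x : ℝ} {f : ℝ → ℝ} (hf : ContDiffOn ℝ 2 f (Icc a c))
    (hx : x ∈ Ioo a c) : HasDerivAt (derivWithin f (Icc a c)) (deriv (deriv f) x) x := by
  have hfIoo : ContDiffOn ℝ 1 (deriv f) (Ioo a c) :=
    (hf.mono Ioo_subset_Icc_self).deriv_of_isOpen isOpen_Ioo (by norm_num)
  have hderiv : derivWithin f (Icc a c) =ᶠ[nhds x] deriv f := by
    filter_upwards [isOpen_Ioo.mem_nhds hx] with y hy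
    exact derivWithin_of_mem_nhds (Icc_mem_nhds hy.1 hy.2)
  exact ((hfIoo.differentiableOn one_ne_zero).differentiableAt
    (isOpen_Ioo.mem_nhds hx)).hasDerivAt.congr_of_eventuallyEq hderiv

lemma exp_mul_eq_of_ode {a c b μ ω : ℝ} {f : ℝ → ℝ} (hac : a < c) (h0 : (0 : ℝ) ∈ Icc a c)
    (hf : ContDiffOn ℝ 2 f (Icc a c))
    (hode : ∀ x ∈ Ioo a c, deriv (deriv f) x + 2 * b * deriv f x = μ * f x)
    (hω : b ^ 2 + μ = ω ^ 2) {x : ℝ} (hx : x ∈ Icc a c) :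
    exp (b * x) * f x =
      f 0 * cosh (ω * x) + (b * f 0 + derivWithin f (Icc a c) 0) * sinhDiv ω x := by
  have hexp (y : ℝ) : HasDerivAt (fun z => exp (b * z)) (exp (b * y) * b) y := by
    simpa using ((hasDerivAt_id' y).const_mul b).exp
  have hf' (y) (hy : y ∈ Icc a c) : HasDerivWithinAt f (derivWithin f (Icc a c) y) (Icc a c) y :=
    ((hf.differentiableOn two_ne_zero) y hy).hasDerivWithinAt
  have hf'c : ContinuousOn (derivWithin f (Icc a c)) (Icc a c) :=
    hf.continuousOn_derivWithin (uniqueDiffOn_Icc hac) one_le_two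
  have := eq_cosh_add_sinhDiv_of_ode (g := fun y => exp (b * y) * f y)
    (g' := fun y => exp (b * y) * (b * f y + derivWithin f (Icc a c) y)) (s := b ^ 2 + μ)
    (fun y hy => ((hexp y).hasDerivWithinAt.mul (hf' y hy)).congr_deriv (by ring))
    ((continuous_exp.comp (continuous_const_mul b)).continuousOn.mul
      ((continuousOn_const.mul hf.continuousOn).add hf'c))
    (fun y hy => by
      have hfy : HasDerivAt f (derivWithin f (Icc a c) y) y :=
        (hf' y (Ioo_subset_Icc_self hy)).hasDerivAt (Icc_mem_nhds hy.1 hy.2)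
      refine ((hexp y).mul ((hfy.const_mul b).add
        (hasDerivAt_derivWithin_Icc hf hy))).congr_deriv ?_
      simp only [Pi.add_apply]
      linear_combination exp (b * y) * hode y hy - 2 * exp (b * y) * b * hfy.deriv)
    hω h0 hx
  simpa using this

lemma sFun_nonneg (q b : ℝ) {lam : ℝ} (hlam : 0 ≤ lam) : 0 ≤ sFun q b lam := by
  unfold sFun; positivity

lemma rFun_eq_cosh_add_sinhDiv (q b B : ℝ) {lam : ℝ} (hlam : 0 ≤ lam) :
    rFun q b B lam =
      (B + 1) * cosh √(sFun q b lam) + (B - 1) * b * sinhDiv √(sFun q b lam) 1 := by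
  rw [rFun, ← sq_sqrt (sFun_nonneg q b hlam), tsum_pow_div_factorial_two_mul,
    tsum_pow_div_factorial_two_mul_add_one, sq_sqrt (sFun_nonneg q b hlam)]

lemma add_one_mul_cosh_add_sub_one_mul_sinhDiv_pos {B b ω : ℝ} (hB : 0 ≤ B) (hb : |b| ≤ ω) :
    0 < (B + 1) * cosh ω + (B - 1) * b * sinhDiv ω 1 := by
  have hsinh : ω * sinhDiv ω 1 = sinh ω := by rw [mul_sinhDiv, mul_one]
  have hS := sinhDiv_nonneg ω zero_le_one
  have hcoef : |(B - 1) * b| ≤ (B + 1) * ω := by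
    rw [abs_mul]
    exact mul_le_mul (abs_sub_le_iff.2 ⟨by linarith, by linarith⟩) hb (abs_nonneg b) (by linarith)
  nlinarith [neg_abs_le ((B - 1) * b), sinh_lt_cosh ω, mul_le_mul_of_nonneg_right hcoef hS]

lemma rFun_pos (q b : ℝ) {B lam : ℝ} (hB : 0 ≤ B) (hlam : 0 ≤ lam) : 0 < rFun q b B lam := by
  rw [rFun_eq_cosh_add_sinhDiv q b B hlam]
  exact add_one_mul_cosh_add_sub_one_mul_sinhDiv_pos hB
    (abs_le_sqrt (le_add_of_nonneg_right (mul_nonneg (sq_nonneg (log q)) hlam)))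

theorem brokenSolution_value_at_zero_down_general
    (q b B : ℝ) (hB : 0 < B) (lam : ℝ) (hlam : 0 ≤ lam) (f : ℝ → ℝ)
    (hf : IsBrokenSolution q b B lam f) (hf1 : f (-1) = 1) (hf2 : f 1 = 0) :
    0 < rFun q b B lam ∧ f 0 = Real.exp (-b) / rFun q b B lam := by
  obtain ⟨-, hfL, hfR, hode, hjump⟩ := hf
  refine ⟨rFun_pos q b hB.le hlam, ?_⟩
  rw [eq_div_iff (rFun_pos q b hB.le hlam).ne', rFun_eq_cosh_add_sinhDiv q b B hlam]
  set ω := √(sFun q b lam)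
  have hω : b ^ 2 + log q ^ 2 * lam = ω ^ 2 := (sq_sqrt (sFun_nonneg q b hlam)).symm
  have hR := exp_mul_eq_of_ode zero_lt_one (left_mem_Icc.2 zero_le_one) hfR
    (fun x hx => hode x (Or.inr hx)) hω (right_mem_Icc.2 zero_le_one)
  have hL := exp_mul_eq_of_ode neg_one_lt_zero (right_mem_Icc.2 neg_one_lt_zero.le) hfL
    (fun x hx => hode x (Or.inl hx)) hω (left_mem_Icc.2 neg_one_lt_zero.le)
  rw [hf2, mul_zero, mul_one] at hR
  rw [hf1, mul_one, mul_neg_one, mul_neg_one, cosh_neg, sinhDiv_neg, hjump] at hL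
  linear_combination -hL - B * hR

theorem brokenSolution_value_at_zero_down
    (q b B : ℝ) (hq : 1 < q) (hB : 0 < B) (lam : ℝ) (hlam : 0 ≤ lam) (f : ℝ → ℝ)
    (hf : IsBrokenSolution q b B lam f) (hf1 : f (-1) = 1) (hf2 : f 1 = 0) :
    0 < rFun q b B lam ∧ f 0 = Real.exp (-b) / rFun q b B lam :=
  brokenSolution_value_at_zero_down_general q b B hB lam hlam f hf hf1 hf2
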